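/- arXiv:2312.11412 — 2 statements merged into one kernel-verified Lean document; each statement's English description precedes it below -/
import Mathlib

section
/- Let a > 0 and define, for real sequences (C_ℓ), the recurrence C_{ℓ+1} = 8a·C_ℓ + 4·A_ℓ·a^{ℓ+1} for ℓ ≥ 1, with C_0 = 1 and C_1 = 12a, where A_ℓ = 2^{3ℓ+1} Γ(ℓ+3/2)/(√π Γ(ℓ+2)). Then for every ℓ ≥ 1, C_ℓ = (8a)^ℓ · ((2ℓ+1)/√π) · Γ(ℓ+1/2)/Γ(ℓ+1). -/
open Real

theorem C_closed_form (a : ℝ) (ha : 0 < a) (C : ℕ → ℝ)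
    (hC0 : C 0 = 1) (hC1 : C 1 = 12 * a)
    (hrec : ∀ ℓ : ℕ, 1 ≤ ℓ →
      C (ℓ + 1) = 8 * a * C ℓ +
        4 * (2 ^ (3 * ℓ + 1) * Real.Gamma ((ℓ : ℝ) + 3 / 2) /
          (Real.sqrt Real.pi * Real.Gamma ((ℓ : ℝ) + 2))) * a ^ (ℓ + 1)) :
    ∀ ℓ : ℕ, 1 ≤ ℓ →
      C ℓ = (8 * a) ^ ℓ * ((2 * (ℓ : ℝ) + 1) / Real.sqrt Real.pi) *
        (Real.Gamma ((ℓ : ℝ) + 1 / 2) / Real.Gamma ((ℓ : ℝ) + 1)) := by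
  have hs : Real.sqrt Real.pi ≠ 0 := ne_of_gt (Real.sqrt_pos.mpr Real.pi_pos)
  intro ℓ hℓ
  induction ℓ, hℓ using Nat.le_induction with
  | base =>
    have h32 : Real.Gamma ((1 : ℝ) + 1 / 2) = Real.sqrt Real.pi / 2 := by
      have := Real.Gamma_add_one (s := (1 : ℝ) / 2) (by norm_num)
      rw [show ((1 : ℝ) + 1 / 2) = 1 / 2 + 1 by ring, this, Real.Gamma_one_half_eq]
      ring
    have h2 : Real.Gamma ((1 : ℝ) + 1) = 1 := by
      rw [show ((1 : ℝ) + 1) = 2 by norm_num, Real.Gamma_two]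
    rw [hC1]
    push_cast
    rw [h32, h2]
    field_simp
    ring
  | succ n hn ih =>
    have hn0 : (0 : ℝ) < (n : ℝ) := by exact_mod_cast hn
    have hG1 : Real.Gamma ((n : ℝ) + 3 / 2) = ((n : ℝ) + 1 / 2) * Real.Gamma ((n : ℝ) + 1 / 2) := by
      have := Real.Gamma_add_one (s := (n : ℝ) + 1 / 2) (by positivity)
      rw [show ((n : ℝ) + 3 / 2) = (n : ℝ) + 1 / 2 + 1 by ring, this]
    have hG2 : Real.Gamma ((n : ℝ) + 2) = ((n : ℝ) + 1) * Real.Gamma ((n : ℝ) + 1) := by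
      have := Real.Gamma_add_one (s := (n : ℝ) + 1) (by positivity)
      rw [show ((n : ℝ) + 2) = (n : ℝ) + 1 + 1 by ring, this]
    have hGa : Real.Gamma ((n : ℝ) + 1 / 2) ≠ 0 := ne_of_gt (Real.Gamma_pos_of_pos (by positivity))
    have hGb : Real.Gamma ((n : ℝ) + 1) ≠ 0 := ne_of_gt (Real.Gamma_pos_of_pos (by positivity))
    have hpow : (2 : ℝ) ^ (3 * n + 1) = 2 * 8 ^ n := by
      rw [show (8 : ℝ) = 2 ^ 3 by norm_num, ← pow_mul, pow_add]
      ring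
    rw [hrec n hn, ih]
    push_cast
    rw [show ((n : ℝ) + 1 + 1 / 2) = (n : ℝ) + 3 / 2 from by ring,
      show ((n : ℝ) + 1 + 1) = (n : ℝ) + 2 from by ring,
      hG1, hG2, hpow, mul_pow, mul_pow,
      show (8 : ℝ) ^ (n + 1) = 8 * 8 ^ n by ring, show a ^ (n + 1) = a * a ^ n by ring,
      show (8 : ℝ) ^ n = 8 ^ n by rfl]
    field_simp
    ring
end

section
/- For all real x₁, …, x_k ≥ 0, the function ∏_{i=1}^k sinh(x_i/2)/(x_i/2) has all Taylor coefficients nonnegative, and consequently ∑_{d : |d| ≤ N} |d| ∏_{i=1}^k (x_i/2)^{2d_i}/(2d_i+1)! ≤ ∏_{i=1}^k cosh(x_i/2), where |d| = d_1 + ⋯ + d_k and the sum is over tuples of nonnegative integers. -/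
open Real Finset

private lemma key_telescope {ι : Type*} [DecidableEq ι] (S B c : ι → ℝ)
    (hS : ∀ i, 0 ≤ S i) (hB : ∀ i, 0 ≤ B i) (h : ∀ i, S i + B i ≤ c i) :
    ∀ s : Finset ι,
      (∏ i ∈ s, S i) + ∑ j ∈ s, B j * ∏ i ∈ s.erase j, S i ≤ ∏ i ∈ s, c i := by
  intro s
  induction s using Finset.cons_induction with
  | empty => simp
  | cons a s ha ih =>
    have hca : (0:ℝ) ≤ c a := le_trans (by have := hS a; have := hB a; linarith) (h a)
    rw [Finset.prod_cons, Finset.sum_cons, Finset.prod_cons]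
    have h1 : (Finset.cons a s ha).erase a = s := by
      rw [Finset.erase_cons]
    have h2 : ∀ j ∈ s, (Finset.cons a s ha).erase j = Finset.cons a (s.erase j)
        (fun hmem => ha (Finset.mem_of_mem_erase hmem)) := by
      intro j hj
      ext y
      simp only [Finset.mem_erase, Finset.mem_cons]
      constructor
      · rintro ⟨hy, (rfl | hy2)⟩
        · exact Or.inl rfl
        · exact Or.inr ⟨hy, hy2⟩
      · rintro (rfl | ⟨hy, hy2⟩)
        · exact ⟨fun hcontra => ha (hcontra ▸ hj), Or.inl rfl⟩
        · exact ⟨hy, Or.inr hy2⟩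
    rw [h1]
    have h3 : ∑ j ∈ s, B j * ∏ i ∈ (Finset.cons a s ha).erase j, S i
        = S a * ∑ j ∈ s, B j * ∏ i ∈ s.erase j, S i := by
      rw [Finset.mul_sum]
      refine Finset.sum_congr rfl fun j hj => ?_
      rw [h2 j hj, Finset.prod_cons]
      ring
    rw [h3]
    have hP : (0:ℝ) ≤ ∏ i ∈ s, S i := Finset.prod_nonneg fun i _ => hS i
    have hQ : (0:ℝ) ≤ ∑ j ∈ s, B j * ∏ i ∈ s.erase j, S i :=
      Finset.sum_nonneg fun j _ => mul_nonneg (hB j)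
        (Finset.prod_nonneg fun i _ => hS i)
    calc S a * ∏ i ∈ s, S i + (B a * ∏ i ∈ s, S i
          + S a * ∑ j ∈ s, B j * ∏ i ∈ s.erase j, S i)
        = (S a + B a) * ∏ i ∈ s, S i
          + S a * ∑ j ∈ s, B j * ∏ i ∈ s.erase j, S i := by ring
      _ ≤ c a * ((∏ i ∈ s, S i) + ∑ j ∈ s, B j * ∏ i ∈ s.erase j, S i) := by
          have hSa : S a ≤ c a := le_trans (by have := hB a; linarith) (h a)
          nlinarith [h a, hP, hQ]
      _ ≤ c a * ∏ i ∈ s, c i := mul_le_mul_of_nonneg_left ih hca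

theorem sinh_prod_coeff_nonneg_and_bound (k : ℕ) (x : Fin k → ℝ)
    (hx : ∀ i, 0 ≤ x i) (N : ℕ) :
    (∀ d : Fin k → ℕ, 0 ≤ ∏ i, (1 : ℝ) / (Nat.factorial (2 * d i + 1) : ℝ)) ∧
      ∑ d ∈ (Fintype.piFinset fun _ : Fin k => Finset.range (N + 1)).filter
          (fun d => ∑ i, d i ≤ N),
          ((∑ i, d i : ℕ) : ℝ) *
            ∏ i, (x i / 2) ^ (2 * d i) / (Nat.factorial (2 * d i + 1) : ℝ) ≤
        ∏ i, Real.cosh (x i / 2) := by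
  constructor
  · intro d
    positivity
  set t : Fin k → ℝ := fun i => x i / 2 with ht
  have hti : ∀ i, 0 ≤ t i := fun i => by have := hx i; simp [ht]; linarith
  set T : Fin k → ℕ → ℝ :=
    fun i n => (t i) ^ (2 * n) / (Nat.factorial (2 * n + 1) : ℝ) with hT
  have hTnn : ∀ i n, 0 ≤ T i n := fun i n => by
    have := hti i; positivity
  set S : Fin k → ℝ := fun i => ∑ n ∈ Finset.range (N + 1), T i n with hSdef
  set B : Fin k → ℝ := fun i => ∑ n ∈ Finset.range (N + 1), (n : ℝ) * T i n with hBdef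
  have hS : ∀ i, 0 ≤ S i := fun i =>
    Finset.sum_nonneg fun n _ => hTnn i n
  have hB : ∀ i, 0 ≤ B i := fun i =>
    Finset.sum_nonneg fun n _ => mul_nonneg (Nat.cast_nonneg n) (hTnn i n)
  have hSB : ∀ i, S i + B i ≤ Real.cosh (t i) := by
    intro i
    have hcosh : ∑ n ∈ Finset.range (N + 1), (t i) ^ (2 * n) / (Nat.factorial (2 * n) : ℝ)
        ≤ Real.cosh (t i) := by
      refine sum_le_hasSum _ (fun n _ => ?_) (Real.hasSum_cosh (t i))
      have := hti i; positivity
    have hterm : ∀ n, T i n + 2 * ((n : ℝ) * T i n)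
        = (t i) ^ (2 * n) / (Nat.factorial (2 * n) : ℝ) := by
      intro n
      have hfac : (Nat.factorial (2 * n + 1) : ℝ)
          = (2 * n + 1 : ℝ) * (Nat.factorial (2 * n) : ℝ) := by
        rw [Nat.factorial_succ]; push_cast; ring
      have h1 : (0:ℝ) < (Nat.factorial (2 * n) : ℝ) := by positivity
      have h2 : (0:ℝ) < (2 * n + 1 : ℝ) := by positivity
      simp only [hT, hfac]
      field_simp
      ring
    have h2B : S i + 2 * B i ≤ Real.cosh (t i) := by
      calc S i + 2 * B i
          = ∑ n ∈ Finset.range (N + 1), (T i n + 2 * ((n : ℝ) * T i n)) := by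
            simp only [hSdef, hBdef, Finset.sum_add_distrib, Finset.mul_sum]
        _ = ∑ n ∈ Finset.range (N + 1), (t i) ^ (2 * n) / (Nat.factorial (2 * n) : ℝ) :=
            Finset.sum_congr rfl fun n _ => hterm n
        _ ≤ Real.cosh (t i) := hcosh
    have := hB i
    linarith
  -- reduce to sum over the full box
  have step1 : ∑ d ∈ (Fintype.piFinset fun _ : Fin k => Finset.range (N + 1)).filter
          (fun d => ∑ i, d i ≤ N),
          ((∑ i, d i : ℕ) : ℝ) * ∏ i, (x i / 2) ^ (2 * d i) / (Nat.factorial (2 * d i + 1) : ℝ)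
      ≤ ∑ d ∈ Fintype.piFinset fun _ : Fin k => Finset.range (N + 1),
          ((∑ i, d i : ℕ) : ℝ) * ∏ i, T i (d i) := by
    refine Finset.sum_le_sum_of_subset_of_nonneg (Finset.filter_subset _ _) ?_
    intro d _ _
    refine mul_nonneg (Nat.cast_nonneg _) (Finset.prod_nonneg fun i _ => hTnn i (d i))
  refine le_trans step1 ?_
  -- swap sums
  have step2 : ∑ d ∈ Fintype.piFinset fun _ : Fin k => Finset.range (N + 1),
        ((∑ i, d i : ℕ) : ℝ) * ∏ i, T i (d i)
      = ∑ j, ∑ d ∈ Fintype.piFinset fun _ : Fin k => Finset.range (N + 1),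
          (d j : ℝ) * ∏ i, T i (d i) := by
    rw [Finset.sum_comm]
    refine Finset.sum_congr rfl fun d _ => ?_
    push_cast
    rw [Finset.sum_mul]
  rw [step2]
  -- evaluate inner sums
  have step3 : ∀ j : Fin k, ∑ d ∈ Fintype.piFinset fun _ : Fin k => Finset.range (N + 1),
        (d j : ℝ) * ∏ i, T i (d i) = B j * ∏ i ∈ Finset.univ.erase j, S i := by
    intro j
    set g : Fin k → ℕ → ℝ :=
      fun i n => if i = j then (n : ℝ) * T i n else T i n with hg
    have heq : ∀ d : Fin k → ℕ, (d j : ℝ) * ∏ i, T i (d i) = ∏ i, g i (d i) := by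
      intro d
      rw [← Finset.mul_prod_erase Finset.univ _ (Finset.mem_univ j),
          ← Finset.mul_prod_erase Finset.univ (fun i => g i (d i)) (Finset.mem_univ j)]
      have e1 : g j (d j) = (d j : ℝ) * T j (d j) := by simp [hg]
      have e2 : ∏ i ∈ Finset.univ.erase j, g i (d i)
          = ∏ i ∈ Finset.univ.erase j, T i (d i) := by
        refine Finset.prod_congr rfl fun i hi => ?_
        simp [hg, Finset.ne_of_mem_erase hi]
      rw [e1, e2, mul_assoc]
    have e3 : ∑ n ∈ Finset.range (N + 1), g j n = B j := by
      simp [hg, hBdef]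
    have e4 : ∏ i ∈ Finset.univ.erase j, ∑ n ∈ Finset.range (N + 1), g i n
        = ∏ i ∈ Finset.univ.erase j, S i := by
      refine Finset.prod_congr rfl fun i hi => ?_
      simp [hg, hSdef, Finset.ne_of_mem_erase hi]
    calc ∑ d ∈ Fintype.piFinset fun _ : Fin k => Finset.range (N + 1),
          (d j : ℝ) * ∏ i, T i (d i)
        = ∑ d ∈ Fintype.piFinset fun _ : Fin k => Finset.range (N + 1),
          ∏ i, g i (d i) := Finset.sum_congr rfl fun d _ => heq d
      _ = ∏ i, ∑ n ∈ Finset.range (N + 1), g i n := (Finset.prod_univ_sum _ _).symm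
      _ = B j * ∏ i ∈ Finset.univ.erase j, S i := by
          rw [← Finset.mul_prod_erase Finset.univ
            (fun i => ∑ n ∈ Finset.range (N + 1), g i n) (Finset.mem_univ j), e3, e4]
  have step4 : ∑ j, B j * ∏ i ∈ Finset.univ.erase j, S i ≤ ∏ i, Real.cosh (t i) := by
    have hkey := key_telescope S B (fun i => Real.cosh (t i)) hS hB hSB Finset.univ
    have hPnn : (0:ℝ) ≤ ∏ i, S i := Finset.prod_nonneg fun i _ => hS i
    linarith
  calc ∑ j, ∑ d ∈ Fintype.piFinset fun _ : Fin k => Finset.range (N + 1),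
        (d j : ℝ) * ∏ i, T i (d i)
      = ∑ j, B j * ∏ i ∈ Finset.univ.erase j, S i :=
        Finset.sum_congr rfl fun j _ => step3 j
    _ ≤ ∏ i, Real.cosh (t i) := step4
end
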